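/- Let A = (Q, {a,b}, δ) be a PFA with a total on Q, carefully synchronized by w with Q.w = {q_l}, let m be minimal with Q.a^m = Q.a^{m+1}, and set B = Q.a^m.b (assuming b is defined on Q.a^m and w factors as w = a^{m_1} b w' with 0 < m_1 ≤ m). Let C = (S, {a}, η) be an a-cluster of depth 1 with center K, disjoint from Q, and form A' on state set Q ∪ S by keeping all transitions of A and C and adding, for each q ∈ K, a transition δ'(q, b) ∈ B. Then (Q ∪ S).w = {q_l}; in particular w carefully synchronizes A'. -/
import Mathlib


def pfaRun {Q A : Type*} (δ : Q → A → Option Q) : Q → List A → Option Q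
  | q, [] => some q
  | q, a :: w => (δ q a).bind fun q' => pfaRun δ q' w

def CarefullySync {Q A : Type*} (δ : Q → A → Option Q) (w : List A) : Prop :=
  ∃ qbar : Q, ∀ q : Q, pfaRun δ q w = some qbar

/-- Image of a set of states under one (partial) letter. -/
def aImg {Q : Type*} (f : Q → Option Q) (S : Set Q) : Set Q := {q' | ∃ q ∈ S, f q = some q'}

/-- `aIter f i` is the image `Q.a^i` of the full state set under `i` applications of the letter. -/
def aIter {Q : Type*} (f : Q → Option Q) (i : ℕ) : Set Q := (aImg f)^[i] Set.univ

/-- The automaton `A'` on `Q ⊕ S`: keep `δ` on `Q`, the cluster map `η` as letter `a`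
(= `false`) on `S`, and `β` as the added `b`-transitions (= `true`) from `S` into `Q`. -/
def clusterDelta {Q S : Type*} (δ : Q → Bool → Option Q) (η : S → S) (β : S → Option Q) :
    Q ⊕ S → Bool → Option (Q ⊕ S)
  | Sum.inl q, x => (δ q x).map Sum.inl
  | Sum.inr s, false => some (Sum.inr (η s))
  | Sum.inr s, true => (β s).map Sum.inl

lemma pfaRun_append {Q A : Type*} (δ : Q → A → Option Q) (u v : List A) :
    ∀ q, pfaRun δ q (u ++ v) = (pfaRun δ q u).bind fun q' => pfaRun δ q' v := by
  induction u with
  | nil => intro q; simp [pfaRun]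
  | cons a u ih =>
    intro q
    simp only [List.cons_append, pfaRun]
    cases δ q a with
    | none => simp
    | some q' => simp [ih]

lemma pfaRun_lift {Q S : Type*} (δ : Q → Bool → Option Q) (η : S → S) (β : S → Option Q)
    (u : List Bool) : ∀ q, pfaRun (clusterDelta δ η β) (Sum.inl q) u =
      (pfaRun δ q u).map Sum.inl := by
  induction u with
  | nil => intro q; simp [pfaRun]
  | cons a u ih =>
    intro q
    simp only [pfaRun, clusterDelta]
    cases δ q a with
    | none => simp
    | some q' => simp [ih]

lemma pfaRun_cluster {Q S : Type*} (δ : Q → Bool → Option Q) (η : S → S) (β : S → Option Q)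
    (n : ℕ) : ∀ s, pfaRun (clusterDelta δ η β) (Sum.inr s) (List.replicate n false) =
      some (Sum.inr (η^[n] s)) := by
  induction n with
  | zero => intro s; simp [pfaRun]
  | succ n ih =>
    intro s
    simp only [List.replicate_succ, pfaRun, clusterDelta, Option.bind_some, ih,
      Function.iterate_succ_apply]

lemma aIter_mem {Q : Type*} (δ : Q → Bool → Option Q) (i : ℕ) (q' : Q) :
    q' ∈ aIter (fun q => δ q false) i ↔
      ∃ q, pfaRun δ q (List.replicate i false) = some q' := by
  induction i generalizing q' with
  | zero => simp [aIter, pfaRun]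
  | succ i ih =>
    constructor
    · intro h
      rw [aIter, Function.iterate_succ_apply'] at h
      obtain ⟨p, hp, hfp⟩ := h
      obtain ⟨q, hq⟩ := (ih p).mp hp
      refine ⟨q, ?_⟩
      have : List.replicate (i + 1) false = List.replicate i false ++ [false] := by
        rw [List.replicate_succ']
      rw [this, pfaRun_append, hq]
      simp [pfaRun, hfp]
    · rintro ⟨q, hq⟩
      have : List.replicate (i + 1) false = List.replicate i false ++ [false] := by
        rw [List.replicate_succ']
      rw [this, pfaRun_append] at hq
      cases hrun : pfaRun δ q (List.replicate i false) with
      | none => rw [hrun] at hq; simp at hq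
      | some p =>
        rw [hrun] at hq
        simp only [Option.bind_some, pfaRun] at hq
        rw [aIter, Function.iterate_succ_apply']
        refine ⟨p, (ih p).mpr ⟨q, hrun⟩, ?_⟩
        simpa using hq

lemma aIter_antitone {Q : Type*} (f : Q → Option Q) : ∀ n, aIter f (n + 1) ⊆ aIter f n := by
  intro n
  induction n with
  | zero => intro x _; trivial
  | succ n ih =>
    rw [aIter, aIter, Function.iterate_succ_apply', Function.iterate_succ_apply']
    rintro x ⟨p, hp, hfp⟩
    have hp' : p ∈ aIter f (n + 1) := by
      rw [aIter, Function.iterate_succ_apply']; exact hp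
    exact ⟨p, ih hp', hfp⟩

lemma aIter_le {Q : Type*} (f : Q → Option Q) {i j : ℕ} (h : i ≤ j) :
    aIter f j ⊆ aIter f i := by
  induction j with
  | zero => simp_all
  | succ j ih =>
    rcases Nat.lt_or_ge i (j + 1) with h' | h'
    · exact (aIter_antitone f j).trans (ih (Nat.lt_succ_iff.mp h'))
    · have : i = j + 1 := le_antisymm h h'
      subst this; exact subset_rfl

/-- Attaching a depth-1 `a`-cluster `(S, η)` with center `K`, with `b`-transitions from `K`
into `B = Q.a^m.b`, yields an automaton on `Q ⊕ S` still carefully synchronized by `w`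
to `q_l`: `(Q ∪ S).w = {q_l}`. -/
theorem stmt_8 {Q S : Type*} [Finite Q] (δ : Q → Bool → Option Q)
    (ha : ∀ q : Q, (δ q false).isSome) (w w' : List Bool) (ql : Q)
    (hw : ∀ q : Q, pfaRun δ q w = some ql) (m m1 : ℕ)
    (hm : aIter (fun q => δ q false) m = aIter (fun q => δ q false) (m + 1))
    (hmin : ∀ j < m, aIter (fun q => δ q false) j ≠ aIter (fun q => δ q false) (j + 1))
    (hbdef : ∀ q ∈ aIter (fun q => δ q false) m, (δ q true).isSome)
    (hwform : w = List.replicate m1 false ++ true :: w') (hm1 : 0 < m1) (hm1m : m1 ≤ m)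
    (η : S → S) (K : Set S) (hdepth : ∀ s : S, η s ∈ K) (hcenter : η '' K = K)
    (β : S → Option Q)
    (hβ : ∀ s ∈ K, ∃ q ∈ aImg (fun q => δ q true) (aIter (fun q => δ q false) m),
      β s = some q) :
    ∀ p : Q ⊕ S, pfaRun (clusterDelta δ η β) p w = some (Sum.inl ql) := by
  intro p
  cases p with
  | inl q => rw [pfaRun_lift, hw q]; rfl
  | inr s =>
    rw [hwform, pfaRun_append, pfaRun_cluster, Option.bind_some]
    -- after m1 a's we are at η^[m1] s ∈ K
    obtain ⟨k, rfl⟩ := Nat.exists_eq_succ_of_ne_zero hm1.ne'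
    have hsK : η^[k + 1] s ∈ K := by
      rw [Function.iterate_succ_apply']; exact hdepth _
    obtain ⟨q, hqB, hβq⟩ := hβ _ hsK
    simp only [pfaRun, clusterDelta, hβq, Option.map_some, Option.bind_some]
    rw [pfaRun_lift]
    -- q ∈ B: exists q1 ∈ aIter m with δ q1 true = some q
    obtain ⟨q1, hq1, hδq1⟩ := hqB
    -- q1 ∈ aIter m1, so exists q0 with run of a^{m1} from q0 = q1
    have hq1' : q1 ∈ aIter (fun q => δ q false) (k + 1) :=
      aIter_le _ hm1m hq1
    obtain ⟨q0, hq0⟩ := (aIter_mem δ (k + 1) q1).mp hq1'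
    have := hw q0
    rw [hwform, pfaRun_append, hq0] at this
    simp only [Option.bind_some, pfaRun, hδq1, Option.bind_some] at this
    rw [this]; rfl
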